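/- Let C be an [n,k]_q linear code with d_{s+1}(C) = n - k + s + 1. Then an s-dimensional subcode U of C is s-minimal if and only if |supp(U)| < d_{s+1}(C). -/
import Mathlib


open Module

variable {F : Type*} [Field F] [Fintype F]

/-- The support of a subspace `U ⊆ F^ι`: coordinates where some vector of `U` is nonzero. -/
def csupp {ι : Type*} (U : Submodule F (ι → F)) : Set ι :=
  {j | ∃ x ∈ U, x j ≠ 0}

/-- The support weight of a subspace of `F^ι`. -/
noncomputable def wt {ι : Type*} (U : Submodule F (ι → F)) : ℕ := (csupp U).ncard

/-- `U` is an `s`-minimal subcode of `C`. -/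
def IsMinimalSubcode {ι : Type*} (C U : Submodule F (ι → F)) (s : ℕ) : Prop :=
  U ≤ C ∧ Module.finrank F U = s ∧
    ∀ V : Submodule F (ι → F), V ≤ C → Module.finrank F V = s →
      csupp V ⊆ csupp U → V = U

/-- `C` is an `s`-minimal code. -/
def SMinimal {ι : Type*} (C : Submodule F (ι → F)) (s : ℕ) : Prop :=
  ∀ U : Submodule F (ι → F), U ≤ C → Module.finrank F U = s → IsMinimalSubcode C U s

/-- The `s`-th generalized Hamming weight of `C`. -/
noncomputable def dGHW {ι : Type*} (C : Submodule F (ι → F)) (s : ℕ) : ℕ :=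
  sInf {w | ∃ U : Submodule F (ι → F), U ≤ C ∧ Module.finrank F U = s ∧ wt U = w}

/-- The `s`-th maximum support weight of `C`. -/
noncomputable def DGHW {ι : Type*} (C : Submodule F (ι → F)) (s : ℕ) : ℕ :=
  sSup {w | ∃ U : Submodule F (ι → F), U ≤ C ∧ Module.finrank F U = s ∧ wt U = w}

lemma csupp_mono' {ι : Type*} {U V : Submodule F (ι → F)} (h : U ≤ V) :
    csupp U ⊆ csupp V := fun _ ⟨x, hx, hj⟩ => ⟨x, h hx, hj⟩

lemma csupp_sup_subset {ι : Type*} (U V : Submodule F (ι → F)) :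
    csupp (U ⊔ V) ⊆ csupp U ∪ csupp V := by
  rintro j ⟨x, hx, hj⟩
  rcases Submodule.mem_sup.mp hx with ⟨u, hu, v, hv, rfl⟩
  by_cases h : u j = 0
  · exact Or.inr ⟨v, hv, by simpa [h] using hj⟩
  · exact Or.inl ⟨u, hu, h⟩

lemma finrank_sup_span_singleton' {n : ℕ} (V : Submodule F (Fin n → F)) {x : Fin n → F}
    (hx : x ∉ V) :
    Module.finrank F ↥(V ⊔ Submodule.span F {x}) = Module.finrank F V + 1 := by
  have hx0 : x ≠ 0 := fun h => hx (by rw [h]; exact V.zero_mem)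
  have hdisj : Disjoint V (Submodule.span F {x}) :=
    (Submodule.disjoint_span_singleton' hx0).mpr hx
  have h := Submodule.finrank_sup_add_finrank_inf_eq V (Submodule.span F {x})
  rwa [hdisj.eq_bot, finrank_bot, finrank_span_singleton hx0, add_zero] at h

lemma exists_le_finrank_eq' {n : ℕ} (B : Submodule F (Fin n → F)) (m : ℕ)
    (hm : m ≤ Module.finrank F B) :
    ∃ V : Submodule F (Fin n → F), V ≤ B ∧ Module.finrank F V = m := by
  induction m with
  | zero => exact ⟨⊥, bot_le, finrank_bot F _⟩
  | succ m ih =>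
    obtain ⟨V, hVB, hV⟩ := ih (Nat.le_of_succ_le hm)
    have hlt : V < B := lt_of_le_of_ne hVB (by rintro rfl; omega)
    obtain ⟨x, hxB, hxV⟩ := SetLike.exists_of_lt hlt
    refine ⟨V ⊔ Submodule.span F {x},
      sup_le hVB (Submodule.span_le.mpr (Set.singleton_subset_iff.mpr hxB)), ?_⟩
    rw [finrank_sup_span_singleton' V hxV, hV]

/-- if `d_{s+1}(C) = n - k + s + 1`, then an `s`-dimensional subcode `U` of `C`
is `s`-minimal iff `|supp(U)| < d_{s+1}(C)`. -/
theorem isMinimalSubcode_iff_wt_lt (n k s : ℕ)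
    (C : Submodule F (Fin n → F)) (hC : Module.finrank F C = k)
    (hd : dGHW C (s + 1) = n - k + s + 1)
    (U : Submodule F (Fin n → F)) (hU : U ≤ C) (hUs : Module.finrank F U = s) :
    IsMinimalSubcode C U s ↔ wt U < dGHW C (s + 1) := by
  classical
  constructor
  · rintro ⟨-, -, hmin⟩
    by_contra hge
    push_neg at hge
    rw [hd] at hge
    rcases Nat.eq_zero_or_pos s with hs | hs
    · subst hs
      have hUbot : U = ⊥ := Submodule.finrank_eq_zero.mp hUs
      have hwU : wt U = 0 := by
        rw [hUbot]
        have : csupp (⊥ : Submodule F (Fin n → F)) = ∅ := by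
          ext j; simp [csupp]
        simp [wt, this]
      omega
    · set T := csupp U with hT
      set ψ : (Fin n → F) →ₗ[F] (↥(Tᶜ) → F) :=
        LinearMap.funLeft F F (Subtype.val : ↥(Tᶜ) → Fin n) with hψ
      set D := C ⊓ LinearMap.ker ψ with hDdef
      have hkerψ : ∀ x : Fin n → F, x ∈ LinearMap.ker ψ ↔ ∀ j : Fin n, j ∉ T → x j = 0 := by
        intro x
        rw [LinearMap.mem_ker, funext_iff]
        constructor
        · intro h j hj; exact h ⟨j, hj⟩
        · rintro h ⟨j, hj⟩; exact h j hj
      have hUD : U ≤ D := by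
        intro u hu
        refine ⟨hU hu, (hkerψ u).mpr fun j hj => ?_⟩
        by_contra h
        exact hj ⟨u, hu, h⟩
      have hDsupp : csupp D ⊆ T := by
        rintro j ⟨x, hx, hj⟩
        by_contra hjT
        exact hj ((hkerψ x).mp hx.2 j hjT)
      -- dimension count
      have hrank : Module.finrank F C ≤ Module.finrank F D + (Tᶜ : Set (Fin n)).ncard := by
        have h1 := LinearMap.finrank_range_add_finrank_ker (ψ.domRestrict C)
        have h2 : Module.finrank F (LinearMap.range (ψ.domRestrict C)) ≤ (Tᶜ : Set (Fin n)).ncard := by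
          have h3 := Submodule.finrank_le (LinearMap.range (ψ.domRestrict C))
          rwa [Module.finrank_fintype_fun_eq_card, ← Nat.card_eq_fintype_card,
            Nat.card_coe_set_eq] at h3
        have h4 : Module.finrank F (LinearMap.ker (ψ.domRestrict C)) = Module.finrank F D := by
          rw [LinearMap.ker_domRestrict, ← Submodule.finrank_map_subtype_eq C,
            Submodule.map_comap_subtype]
        omega
      have hkn : k ≤ n := by
        rw [← hC]
        have := Submodule.finrank_le C
        rwa [Module.finrank_fintype_fun_eq_card, Fintype.card_fin] at this
      have hcompl : T.ncard + (Tᶜ : Set (Fin n)).ncard = n := by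
        rw [Set.ncard_add_ncard_compl, Nat.card_eq_fintype_card, Fintype.card_fin]
      have hwU : wt U = T.ncard := rfl
      have hDrank : s + 1 ≤ Module.finrank F D := by rw [hC] at hrank; omega
      -- produce a different s-dimensional subcode with support inside T
      have hUltD : U < D := lt_of_le_of_ne hUD (fun h => by rw [← h] at hDrank; omega)
      obtain ⟨x, hxD, hxU⟩ := SetLike.exists_of_lt hUltD
      obtain ⟨H, hHU, hHr⟩ := exists_le_finrank_eq' U (s - 1) (by omega)
      have hxH : x ∉ H := fun h => hxU (hHU h)
      set V := H ⊔ Submodule.span F {x} with hVdef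
      have hxV : x ∈ V := Submodule.mem_sup_right (Submodule.mem_span_singleton_self x)
      have hVD : V ≤ D := sup_le (hHU.trans hUD)
        (Submodule.span_le.mpr (Set.singleton_subset_iff.mpr hxD))
      have hVC : V ≤ C := hVD.trans inf_le_left
      have hVr : Module.finrank F V = s := by
        rw [finrank_sup_span_singleton' H hxH, hHr]; omega
      have hVsupp : csupp V ⊆ csupp U := (csupp_mono' hVD).trans hDsupp
      exact hxU ((hmin V hVC hVr hVsupp) ▸ hxV)
  · intro hlt
    refine ⟨hU, hUs, fun V hVC hVs hVsupp => ?_⟩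
    by_contra hne
    have hW : s + 1 ≤ Module.finrank F ↥(U ⊔ V) := by
      by_contra hle
      push_neg at hle
      have h1 : U = U ⊔ V :=
        Submodule.eq_of_le_of_finrank_le le_sup_left (by omega)
      have h2 : V = U ⊔ V :=
        Submodule.eq_of_le_of_finrank_le le_sup_right (by omega)
      exact hne (h2.trans h1.symm)
    obtain ⟨W, hWle, hWr⟩ := exists_le_finrank_eq' (U ⊔ V) (s + 1) hW
    have hWC : W ≤ C := hWle.trans (sup_le hU hVC)
    have hdle : dGHW C (s + 1) ≤ wt W := Nat.sInf_le ⟨W, hWC, hWr, rfl⟩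
    have hsub : csupp W ⊆ csupp U := (csupp_mono' hWle).trans
      ((csupp_sup_subset U V).trans (Set.union_subset subset_rfl hVsupp))
    have hw : wt W ≤ wt U := Set.ncard_le_ncard hsub (Set.toFinite _)
    omega
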